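/- Define g : {0,1} × ℕ × {0,1} → {0,1} × ℕ by g(x,y,ξ) = (1,0) if (x,y) = (1,0), and g(x,y,ξ) = (ξ, y - x + ξ) otherwise. Let 0 < p < α < 1 and set α* = (α-p)/(α(1-p)). If (X,Y,ξ) is distributed as Ber(α) ⊗ (Geo(α*)-1) ⊗ Ber(p), where Geo(α*)-1 is the measure on ℕ with P(k) = α*(1-α*)^k for k ≥ 0, then g(X,Y,ξ) is distributed as Ber(α) ⊗ (Geo(α*)-1). -/

import Mathlib

open MeasureTheory

/-- Bernoulli measure on `{0,1}` (modeled as `Bool`), giving mass `q` to `1 = true`. -/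
noncomputable def ber (q : ℝ) : Measure Bool :=
  ENNReal.ofReal (1 - q) • Measure.dirac false + ENNReal.ofReal q • Measure.dirac true

/-- The shifted geometric measure on `ℕ`: `P(k) = a (1-a)^k` for `k ≥ 0`. -/
noncomputable def geoShift (a : ℝ) : Measure ℕ :=
  Measure.sum (fun k => ENNReal.ofReal (a * (1 - a) ^ k) • Measure.dirac k)

/-- The local update map of Model 2: `g(x,y,ξ) = (1,0)` if `(x,y) = (1,0)`,
and `g(x,y,ξ) = (ξ, y - x + ξ)` otherwise. -/
def hamUpdate2 : Bool × ℕ × Bool → Bool × ℕ := fun ⟨x, y, ξ⟩ =>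
  if x = true ∧ y = 0 then (true, 0)
  else (ξ, y - (if x then 1 else 0) + (if ξ then 1 else 0))

/-!
Every point `(b, n)` has exactly two preimages under `hamUpdate2`, so the claim reduces to three
families of two-term balance equations between point masses. Writing `r = 1 - α*` for the ratio of
the geometric weights, all of them follow from `P(ξ = 0) + P(ξ = 1) = 1` and the single relation
`α r (1 - p) = p (1 - α)`, which is exactly how `α*` is chosen.
-/

open scoped ENNReal

lemma measure_pair_of_ne {Ω : Type*} [MeasurableSpace Ω] [MeasurableSingletonClass Ω]
    (μ : Measure Ω) {a b : Ω} (hab : a ≠ b) : μ {a, b} = μ {a} + μ {b} := by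
  rw [Set.insert_eq, measure_union (by simpa using hab) (measurableSet_singleton b)]

lemma MeasureTheory.Measure.prod_prod_singleton {α β γ : Type*} [MeasurableSpace α] [MeasurableSpace β]
    [MeasurableSpace γ] (μ : Measure α) (ν : Measure β) (ρ : Measure γ) [SFinite ν] [SFinite ρ]
    (x : α) (y : β) (z : γ) : μ.prod (ν.prod ρ) {(x, y, z)} = μ {x} * (ν {y} * ρ {z}) := by
  rw [← Set.singleton_prod_singleton, ← Set.singleton_prod_singleton, Measure.prod_prod,
    Measure.prod_prod]

lemma hamUpdate2_preimage_false (n : ℕ) :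
    hamUpdate2 ⁻¹' {(false, n)} = {(false, n, false), (true, n + 1, false)} := by
  ext ⟨x, y, ξ⟩
  cases x <;> cases ξ <;> grind [hamUpdate2]

lemma hamUpdate2_preimage_true_zero :
    hamUpdate2 ⁻¹' {(true, 0)} = {(true, 0, false), (true, 0, true)} := by
  ext ⟨x, y, ξ⟩
  cases x <;> cases ξ <;> grind [hamUpdate2]

lemma hamUpdate2_preimage_true_succ (k : ℕ) :
    hamUpdate2 ⁻¹' {(true, k + 1)} = {(false, k, true), (true, k + 1, true)} := by
  ext ⟨x, y, ξ⟩
  cases x <;> cases ξ <;> grind [hamUpdate2]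

theorem map_hamUpdate2_prod_prod (μ ρ : Measure Bool) (ν : Measure ℕ) [SFinite ν] [SFinite ρ]
    [IsProbabilityMeasure ρ] (r : ℝ≥0∞) (hν : ∀ n, ν {n + 1} = ν {n} * r)
    (hbal : μ {true} * r * ρ {false} = ρ {true} * μ {false}) :
    (μ.prod (ν.prod ρ)).map hamUpdate2 = μ.prod ν := by
  have hρ : ρ {false} + ρ {true} = 1 := by
    rw [← measure_pair_of_ne ρ Bool.false_ne_true, ← Bool.univ_eq, measure_univ]
  refine Measure.ext_iff_singleton.mpr fun ⟨b, n⟩ => ?_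
  rw [Measure.map_apply (measurable_of_countable _) (measurableSet_singleton _)]
  conv_rhs => rw [← Set.singleton_prod_singleton, Measure.prod_prod]
  match b, n with
  | false, n =>
    rw [hamUpdate2_preimage_false, measure_pair_of_ne _ (by simp), Measure.prod_prod_singleton,
      Measure.prod_prod_singleton, hν]
    calc μ {false} * (ν {n} * ρ {false}) + μ {true} * (ν {n} * r * ρ {false})
        = μ {false} * ν {n} * ρ {false} + ν {n} * (μ {true} * r * ρ {false}) := by ring
      _ = μ {false} * ν {n} * (ρ {false} + ρ {true}) := by rw [hbal]; ring
      _ = μ {false} * ν {n} := by rw [hρ, mul_one]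
  | true, 0 =>
    rw [hamUpdate2_preimage_true_zero, measure_pair_of_ne _ (by simp), Measure.prod_prod_singleton,
      Measure.prod_prod_singleton, ← mul_add, ← mul_add, hρ, mul_one]
  | true, k + 1 =>
    rw [hamUpdate2_preimage_true_succ, measure_pair_of_ne _ (by simp), Measure.prod_prod_singleton,
      Measure.prod_prod_singleton, hν]
    calc μ {false} * (ν {k} * ρ {true}) + μ {true} * (ν {k} * r * ρ {true})
        = ν {k} * (ρ {true} * μ {false}) + μ {true} * (ν {k} * r) * ρ {true} := by ring
      _ = μ {true} * (ν {k} * r) * (ρ {false} + ρ {true}) := by rw [← hbal]; ring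
      _ = μ {true} * (ν {k} * r) := by rw [hρ, mul_one]

instance (q : ℝ) : SFinite (ber q) := by unfold ber; infer_instance

instance (a : ℝ) : SFinite (geoShift a) := by unfold geoShift; infer_instance

@[simp] lemma ber_singleton_true (q : ℝ) : ber q {true} = ENNReal.ofReal q := by simp [ber]

@[simp] lemma ber_singleton_false (q : ℝ) : ber q {false} = ENNReal.ofReal (1 - q) := by simp [ber]

lemma isProbabilityMeasure_ber {q : ℝ} (hq₀ : 0 ≤ q) (hq₁ : q ≤ 1) :
    IsProbabilityMeasure (ber q) :=
  ⟨by simp [ber, ← ENNReal.ofReal_add (sub_nonneg.mpr hq₁) hq₀]⟩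

lemma geoShift_singleton (a : ℝ) (k : ℕ) :
    geoShift a {k} = ENNReal.ofReal (a * (1 - a) ^ k) := by
  rw [geoShift, Measure.sum_apply _ (measurableSet_singleton k), tsum_eq_single k]
  · simp
  · intro j hj
    simp [hj]

lemma geoShift_singleton_succ {a : ℝ} (ha₀ : 0 ≤ a) (ha₁ : a ≤ 1) (k : ℕ) :
    geoShift a {k + 1} = geoShift a {k} * ENNReal.ofReal (1 - a) := by
  have : 0 ≤ 1 - a := sub_nonneg.mpr ha₁
  rw [geoShift_singleton, geoShift_singleton, ← ENNReal.ofReal_mul (by positivity), pow_succ,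
    mul_assoc]

theorem local_balance_model2 (p α αs : ℝ) (hp : 0 < p) (hpa : p < α) (ha1 : α < 1)
    (hαs : αs = (α - p) / (α * (1 - p))) :
    ((ber α).prod ((geoShift αs).prod (ber p))).map hamUpdate2
      = (ber α).prod (geoShift αs) := by
  have hα : 0 < α := hp.trans hpa
  have hp₁ : 0 < 1 - p := by linarith
  have hden : 0 < α * (1 - p) := mul_pos hα hp₁
  have hαs₀ : 0 ≤ αs := hαs ▸ div_nonneg (by linarith) hden.le
  have hαs₁ : αs ≤ 1 := hαs ▸ (div_le_one hden).mpr (by nlinarith)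
  have hrel : α * (1 - αs) * (1 - p) = p * (1 - α) := by
    rw [hαs]
    field_simp [hp₁.ne']
    ring
  have := isProbabilityMeasure_ber hp.le (by linarith)
  refine map_hamUpdate2_prod_prod _ _ _ _ (geoShift_singleton_succ hαs₀ hαs₁) ?_
  rw [ber_singleton_true, ber_singleton_false, ber_singleton_true, ber_singleton_false,
    ← ENNReal.ofReal_mul hα.le, ← ENNReal.ofReal_mul (by positivity),
    ← ENNReal.ofReal_mul hp.le, hrel]
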